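/- arXiv:2405.19402 — 2 statements merged into one kernel-verified Lean document; each statement's English description precedes it below -/
import Mathlib

section
/- The map ψ from the real projective space ℝP³ to ℝP⁴ given in homogeneous coordinates by ψ([x₀:x₁:x₂:x₃]) = [x₀ : x₁ : x₂ : x₃ : −(x₀⁵+x₁⁵+x₂⁵+x₃⁵)^{1/5}], where t ↦ t^{1/5} denotes the real fifth root, is well defined (independent of the choice of homogeneous representative) and is a homeomorphism from ℝP³ onto the real locus L = {[y₀:y₁:y₂:y₃:y₄] ∈ ℝP⁴ : y₀⁵+y₁⁵+y₂⁵+y₃⁵+y₄⁵ = 0} of the Fermat quintic, equipped with the subspace topology. -/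
/-!
On the real locus `L` the last coordinate is determined by the others,
`y₄ = -(y₀⁵ + y₁⁵ + y₂⁵ + y₃⁵)^{1/5}`, and `(y₀, y₁, y₂, y₃) ≠ 0` because a single nonzero fifth
power cannot vanish. Hence `ψ` is a bijection whose inverse forgets `y₄`. Both maps are induced
by continuous maps on homogeneous coordinates; for the inverse one uses that `ℝ⁵ ∖ 0 → ℝP⁴` is an
*open* quotient map, so that it stays a quotient map over the subspace `L`.
-/

open scoped LinearAlgebra.Projectivization

/-- The real fifth root `t ↦ t^{1/5}`, the inverse of the odd increasing bijection
`t ↦ t⁵` of `ℝ`. -/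
noncomputable def fifthRoot (t : ℝ) : ℝ := Real.sign t * |t| ^ ((5 : ℝ)⁻¹)

/-- Real projective space `ℝPⁿ`, as the quotient of `ℝ^{n+1} ∖ {0}` by nonzero scalars,
carries the quotient topology. -/
instance (n : ℕ) : TopologicalSpace (ℙ ℝ (Fin (n + 1) → ℝ)) :=
  inferInstanceAs (TopologicalSpace (Quotient (projectivizationSetoid ℝ (Fin (n + 1) → ℝ))))

theorem snoc_ne_zero {x : Fin 4 → ℝ} (hx : x ≠ 0) (a : ℝ) :
    (Fin.snoc x a : Fin 5 → ℝ) ≠ 0 := by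
  intro h
  apply hx
  funext i
  have := congrFun h (Fin.castSucc i)
  simpa using this

/-- The real locus `L = {[y₀:⋯:y₄] ∈ ℝP⁴ : y₀⁵ + y₁⁵ + y₂⁵ + y₃⁵ + y₄⁵ = 0}` of the
Fermat quintic, with the subspace topology. -/
def FermatRealLocus : Type :=
  { p : ℙ ℝ (Fin 5 → ℝ) // ∑ i, (p.rep i) ^ 5 = 0 }

instance : TopologicalSpace FermatRealLocus :=
  inferInstanceAs (TopologicalSpace { p : ℙ ℝ (Fin 5 → ℝ) // ∑ i, (p.rep i) ^ 5 = 0 })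

theorem isOpenQuotientMap_projectivizationSetoid_mk {K V : Type*} [DivisionRing K]
    [AddCommGroup V] [Module K V] [TopologicalSpace V] [ContinuousConstSMul K V] :
    IsOpenQuotientMap (Quotient.mk (projectivizationSetoid K V)) := by
  refine ⟨Quotient.mk_surjective, continuous_quotient_mk', fun U hU => ?_⟩
  have hsat : Quotient.mk (projectivizationSetoid K V) ⁻¹'
      (Quotient.mk (projectivizationSetoid K V) '' U) =
      ⋃ c : Kˣ, (fun v : {v : V // v ≠ 0} => (⟨c • v.1, smul_ne_zero c.ne_zero v.2⟩ :
        {v : V // v ≠ 0})) ⁻¹' U := by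
    ext w
    simp only [Set.mem_preimage, Set.mem_image, Set.mem_iUnion, Quotient.eq]
    constructor
    · rintro ⟨u, hu, c, hc⟩
      exact ⟨c, by convert hu using 1; exact Subtype.ext hc⟩
    · rintro ⟨c, hc⟩
      exact ⟨_, hc, c, rfl⟩
  refine isQuotientMap_quotient_mk'.isOpen_preimage.1 (hsat ▸ ?_)
  exact isOpen_iUnion fun c =>
    hU.preimage ((continuous_subtype_val.const_smul (c : K)).subtype_mk _)

theorem isOpenQuotientMap_mk (n : ℕ) :
    IsOpenQuotientMap
      (fun v : {v : Fin (n + 1) → ℝ // v ≠ 0} => Projectivization.mk ℝ v.1 v.2) :=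
  isOpenQuotientMap_projectivizationSetoid_mk

theorem sum_rep_pow_eq_zero_iff {K ι : Type*} [Field K] [Fintype ι] {v : ι → K} (hv : v ≠ 0)
    (k : ℕ) : ∑ i, (Projectivization.mk K v hv).rep i ^ k = 0 ↔ ∑ i, v i ^ k = 0 := by
  obtain ⟨c, hc⟩ := Projectivization.exists_smul_eq_mk_rep K v hv
  simp [← hc, Units.smul_def, mul_pow, ← Finset.mul_sum]

theorem strictMono_pow_five : StrictMono fun t : ℝ => t ^ 5 :=
  Odd.strictMono_pow (by decide)

theorem pow_five_fifthRoot (t : ℝ) : fifthRoot t ^ 5 = t := by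
  have hroot : (|t| ^ (5 : ℝ)⁻¹) ^ 5 = |t| := by
    rw [← Real.rpow_natCast, ← Real.rpow_mul (abs_nonneg t)]
    norm_num
  rw [fifthRoot, mul_pow, hroot]
  rcases lt_trichotomy t 0 with ht | rfl | ht
  · rw [Real.sign_of_neg ht, abs_of_neg ht]; ring
  · simp
  · rw [Real.sign_of_pos ht, abs_of_pos ht]; ring

theorem fifthRoot_pow_five (t : ℝ) : fifthRoot (t ^ 5) = t :=
  strictMono_pow_five.injective (pow_five_fifthRoot _)

theorem fifthRoot_neg (t : ℝ) : fifthRoot (-t) = -fifthRoot t :=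
  strictMono_pow_five.injective <| by
    simp only [pow_five_fifthRoot, Odd.neg_pow (by decide : Odd 5)]

theorem fifthRoot_pow_five_mul (c t : ℝ) : fifthRoot (c ^ 5 * t) = c * fifthRoot t :=
  strictMono_pow_five.injective <| by simp only [pow_five_fifthRoot, mul_pow]

@[fun_prop]
theorem continuous_fifthRoot : Continuous fifthRoot := by
  refine Monotone.continuous_of_surjective (fun s t hst => ?_)
    (fun t => ⟨t ^ 5, fifthRoot_pow_five t⟩)
  rwa [← strictMono_pow_five.le_iff_le, pow_five_fifthRoot, pow_five_fifthRoot]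

noncomputable def fermatLift {n : ℕ} (x : Fin n → ℝ) : Fin (n + 1) → ℝ :=
  Fin.snoc x (-fifthRoot (∑ i, x i ^ 5))

section fermatLift

variable {n : ℕ}

theorem sum_fermatLift_pow_five (x : Fin n → ℝ) : ∑ i, fermatLift x i ^ 5 = 0 := by
  simp [fermatLift, Fin.sum_univ_castSucc, Odd.neg_pow (by decide : Odd 5), pow_five_fifthRoot]

theorem fermatLift_smul (c : ℝ) (x : Fin n → ℝ) : fermatLift (c • x) = c • fermatLift x := by
  have hsum : ∑ i, (c • x) i ^ 5 = c ^ 5 * ∑ i, x i ^ 5 := by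
    simp [mul_pow, Finset.mul_sum]
  ext i
  refine Fin.lastCases ?_ (fun j => ?_) i
  · rw [fermatLift, fermatLift, hsum, fifthRoot_pow_five_mul]
    simp
  · simp [fermatLift]

theorem fermatLift_init {y : Fin (n + 1) → ℝ} (hy : ∑ i, y i ^ 5 = 0) :
    fermatLift (Fin.init y) = y := by
  have hlast : ∑ i, Fin.init y i ^ 5 = -y (Fin.last n) ^ 5 := by
    rw [Fin.sum_univ_castSucc] at hy
    exact eq_neg_of_add_eq_zero_left hy
  rw [fermatLift, hlast, fifthRoot_neg, fifthRoot_pow_five, neg_neg, Fin.snoc_init_self]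

theorem init_ne_zero_of_sum_pow_five_eq_zero {y : Fin (n + 1) → ℝ} (hy : y ≠ 0)
    (hsum : ∑ i, y i ^ 5 = 0) : Fin.init y ≠ 0 := by
  intro h
  apply hy
  rw [← fermatLift_init hsum, h, ← zero_smul ℝ (0 : Fin n → ℝ), fermatLift_smul, zero_smul]

theorem continuous_fermatLift : Continuous (fermatLift (n := n)) := by
  unfold fermatLift
  fun_prop

end fermatLift

noncomputable def toFermatRealLocus : ℙ ℝ (Fin 4 → ℝ) → FermatRealLocus :=
  Projectivization.lift
    (fun v => ⟨Projectivization.mk ℝ (fermatLift v.1) (snoc_ne_zero v.2 _),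
      (sum_rep_pow_eq_zero_iff _ 5).2 (sum_fermatLift_pow_five _)⟩)
    (by
      rintro ⟨-, hv⟩ ⟨w, hw⟩ c rfl
      refine Subtype.ext ((Projectivization.mk_eq_mk_iff' ℝ _ _ _ _).2 ⟨c, ?_⟩)
      exact (fermatLift_smul c w).symm)

noncomputable def ofFermatRealLocus (q : FermatRealLocus) : ℙ ℝ (Fin 4 → ℝ) :=
  Projectivization.mk ℝ (Fin.init q.1.rep)
    (init_ne_zero_of_sum_pow_five_eq_zero q.1.rep_nonzero q.2)

theorem ofFermatRealLocus_mk {y : Fin 5 → ℝ} (hy : y ≠ 0) (hsum : ∑ i, y i ^ 5 = 0) :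
    ofFermatRealLocus ⟨Projectivization.mk ℝ y hy, (sum_rep_pow_eq_zero_iff hy 5).2 hsum⟩ =
      Projectivization.mk ℝ (Fin.init y) (init_ne_zero_of_sum_pow_five_eq_zero hy hsum) := by
  obtain ⟨c, hc⟩ := Projectivization.exists_smul_eq_mk_rep ℝ y hy
  refine (Projectivization.mk_eq_mk_iff ℝ _ _ _ _).2 ⟨c, ?_⟩
  simp only [← hc]
  rfl

theorem ofFermatRealLocus_toFermatRealLocus (p : ℙ ℝ (Fin 4 → ℝ)) :
    ofFermatRealLocus (toFermatRealLocus p) = p := by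
  induction p with
  | h x hx =>
    refine (ofFermatRealLocus_mk _ (sum_fermatLift_pow_five x)).trans ?_
    simp only [fermatLift, Fin.init_snoc]

theorem toFermatRealLocus_ofFermatRealLocus (q : FermatRealLocus) :
    toFermatRealLocus (ofFermatRealLocus q) = q := by
  obtain ⟨p, hp⟩ := q
  induction p with
  | h y hy =>
    have hsum := (sum_rep_pow_eq_zero_iff hy 5).1 hp
    rw [ofFermatRealLocus_mk hy hsum]
    refine Subtype.ext ((Projectivization.mk_eq_mk_iff' ℝ _ _ _ hy).2 ⟨1, ?_⟩)
    rw [one_smul]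
    exact (fermatLift_init hsum).symm

theorem continuous_toFermatRealLocus : Continuous toFermatRealLocus := by
  rw [(isOpenQuotientMap_mk 3).isQuotientMap.continuous_iff]
  have hlift : Continuous fun v : {v : Fin 4 → ℝ // v ≠ 0} =>
      (⟨fermatLift v.1, snoc_ne_zero v.2 _⟩ : {w : Fin 5 → ℝ // w ≠ 0}) :=
    (continuous_fermatLift.comp continuous_subtype_val).subtype_mk _
  exact ((isOpenQuotientMap_mk 4).continuous.comp hlift).subtype_mk _

theorem continuous_ofFermatRealLocus : Continuous ofFermatRealLocus := by
  let L : Set (ℙ ℝ (Fin 5 → ℝ)) := {p | ∑ i, p.rep i ^ 5 = 0}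
  let S := (fun v : {v : Fin 5 → ℝ // v ≠ 0} => Projectivization.mk ℝ v.1 v.2) ⁻¹' L
  refine ((isOpenQuotientMap_mk 4).restrictPreimage L).isQuotientMap.continuous_iff.2 ?_
  have hsum (v : S) : ∑ i, v.1.1 i ^ 5 = 0 := (sum_rep_pow_eq_zero_iff v.1.2 5).1 v.2
  have hinit : Continuous fun v : S => (⟨Fin.init v.1.1,
      init_ne_zero_of_sum_pow_five_eq_zero v.1.2 (hsum v)⟩ : {w : Fin 4 → ℝ // w ≠ 0}) :=
    (continuous_subtype_val.comp continuous_subtype_val).finInit.subtype_mk _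
  exact ((isOpenQuotientMap_mk 3).continuous.comp hinit).congr fun v =>
    (ofFermatRealLocus_mk v.1.2 (hsum v)).symm

noncomputable def fermatRealLocusHomeomorph : ℙ ℝ (Fin 4 → ℝ) ≃ₜ FermatRealLocus where
  toFun := toFermatRealLocus
  invFun := ofFermatRealLocus
  left_inv := ofFermatRealLocus_toFermatRealLocus
  right_inv := toFermatRealLocus_ofFermatRealLocus
  continuous_toFun := continuous_toFermatRealLocus
  continuous_invFun := continuous_ofFermatRealLocus

/-- The map `ψ : ℝP³ → ℝP⁴`,
`[x₀:x₁:x₂:x₃] ↦ [x₀ : x₁ : x₂ : x₃ : −(x₀⁵+x₁⁵+x₂⁵+x₃⁵)^{1/5}]`, is well defined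
(independent of the homogeneous representative) and is a homeomorphism from `ℝP³` onto
the real locus `L` of the Fermat quintic, equipped with the subspace topology. -/
theorem stmt_0 :
    ∃ ψ : ℙ ℝ (Fin 4 → ℝ) ≃ₜ FermatRealLocus,
      ∀ (x : Fin 4 → ℝ) (hx : x ≠ 0),
        (ψ (Projectivization.mk ℝ x hx)).1 =
          Projectivization.mk ℝ
            (Fin.snoc x (-(fifthRoot (∑ i, (x i) ^ 5))) : Fin 5 → ℝ)
            (snoc_ne_zero hx _) :=
  ⟨fermatRealLocusHomeomorph, fun _ _ => rfl⟩
end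

section
/- Let f*(x₀,x₁,x₂,x₃,x₄) = x₀(x₁²+x₂²+x₃²−x₄²) − (x₁³+x₂³+x₃³−(1/2)x₄³), a homogeneous cubic polynomial on ℝ⁵. Then f*(1,0,0,0,0) = 0 and ∇f*(1,0,0,0,0) = 0, and for every nonzero x ∈ ℝ⁵ the gradient ∇f*(x) ∈ ℝ⁵ vanishes if and only if x is a nonzero scalar multiple of (1,0,0,0,0). Consequently a = [1:0:0:0:0] is the unique singular point of the real projective cubic Z_ℝ(f*) ⊂ ℝP⁴. -/
/-!
The partial derivatives of `f*` in `x₁, x₂, x₃` force `xᵢ ∈ {0, 2x₀/3}`, and the one in `x₄`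
forces `x₄ ∈ {0, 4x₀/3}`. The partial in `x₀` says `x₁² + x₂² + x₃² = x₄²`, and since
`3 · (2/3)² < (4/3)²` this leaves only `x₁ = x₂ = x₃ = x₄ = 0`.
-/

/-- The homogeneous cubic
`f*(x) = x₀(x₁² + x₂² + x₃² − x₄²) − (x₁³ + x₂³ + x₃³ − (1/2)x₄³)` on `ℝ⁵`. -/
noncomputable def fStar (x : Fin 5 → ℝ) : ℝ :=
  x 0 * (x 1 ^ 2 + x 2 ^ 2 + x 3 ^ 2 - x 4 ^ 2)
    - (x 1 ^ 3 + x 2 ^ 3 + x 3 ^ 3 - (1 / 2) * x 4 ^ 3)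

/-- The point `a = (1,0,0,0,0) ∈ ℝ⁵`. -/
noncomputable def aPt : Fin 5 → ℝ := fun i => if i = 0 then 1 else 0

theorem ContinuousLinearMap.sum_smul_proj_eq_zero_iff {R ι : Type*} [CommSemiring R]
    [TopologicalSpace R] [IsTopologicalSemiring R] [Fintype ι] (v : ι → R) :
    (∑ i, v i • proj i : (ι → R) →L[R] R) = 0 ↔ v = 0 := by
  classical
  refine ⟨fun h => funext fun i => ?_, fun h => by ext; simp [h]⟩
  simpa [Pi.single_apply] using DFunLike.congr_fun h (Pi.single i 1)

theorem sq_le_of_three_sq_eq {K : Type*} [Field K] [LinearOrder K] [IsStrictOrderedRing K]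
    {t y : K} (h : 3 * y ^ 2 = 2 * t * y) : 9 * y ^ 2 ≤ 4 * t ^ 2 := by
  rcases mul_eq_zero.1 (show y * (3 * y - 2 * t) = 0 by linear_combination h) with hy | hy
  · rw [hy]
    nlinarith [sq_nonneg t]
  · nlinarith

theorem eq_zero_or_eq_of_three_sq_eq {R : Type*} [CommRing R] [IsDomain R] {t y : R}
    (h : 3 * y ^ 2 = 4 * t * y) : y = 0 ∨ 3 * y = 4 * t :=
  (mul_eq_zero.1 (show y * (3 * y - 4 * t) = 0 by linear_combination h)).imp_right
    sub_eq_zero.mp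

noncomputable def gradFStar (x : Fin 5 → ℝ) : Fin 5 → ℝ :=
  ![x 1 ^ 2 + x 2 ^ 2 + x 3 ^ 2 - x 4 ^ 2,
    2 * x 0 * x 1 - 3 * x 1 ^ 2,
    2 * x 0 * x 2 - 3 * x 2 ^ 2,
    2 * x 0 * x 3 - 3 * x 3 ^ 2,
    -(2 * x 0 * x 4) + (3 / 2) * x 4 ^ 2]

theorem hasFDerivAt_fStar (x : Fin 5 → ℝ) :
    HasFDerivAt fStar
      (∑ i, gradFStar x i • ContinuousLinearMap.proj i : (Fin 5 → ℝ) →L[ℝ] ℝ) x := by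
  have h (i : Fin 5) : HasFDerivAt (fun y : Fin 5 → ℝ => y i) (ContinuousLinearMap.proj i) x :=
    hasFDerivAt_apply (𝕜 := ℝ) i x
  have H := ((h 0).mul ((((h 1).pow 2).add ((h 2).pow 2)).add ((h 3).pow 2) |>.sub
      ((h 4).pow 2))).sub
    (((((h 1).pow 3).add ((h 2).pow 3)).add ((h 3).pow 3)).sub (((h 4).pow 3).const_mul (1 / 2)))
  refine H.congr_fderiv ?_
  ext v
  simp only [Fin.isValue, Nat.add_one_sub_one, pow_one, nsmul_eq_mul, Nat.cast_ofNat,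
    Pi.sub_apply, Pi.add_apply, one_div, sub_apply, add_apply, smul_apply,
    ContinuousLinearMap.proj_apply, smul_eq_mul, gradFStar, Fin.sum_univ_five,
    Matrix.cons_val_zero, Matrix.cons_val_one, Matrix.cons_val]
  ring

theorem fderiv_fStar_eq_zero_iff (x : Fin 5 → ℝ) :
    fderiv ℝ fStar x = 0 ↔ gradFStar x = 0 := by
  rw [(hasFDerivAt_fStar x).fderiv, ContinuousLinearMap.sum_smul_proj_eq_zero_iff]

theorem gradFStar_eq_zero_iff (x : Fin 5 → ℝ) :
    gradFStar x = 0 ↔ x 1 = 0 ∧ x 2 = 0 ∧ x 3 = 0 ∧ x 4 = 0 := by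
  constructor
  · intro h
    have h0 : x 1 ^ 2 + x 2 ^ 2 + x 3 ^ 2 - x 4 ^ 2 = 0 := congrFun h 0
    have h1 : 2 * x 0 * x 1 - 3 * x 1 ^ 2 = 0 := congrFun h 1
    have h2 : 2 * x 0 * x 2 - 3 * x 2 ^ 2 = 0 := congrFun h 2
    have h3 : 2 * x 0 * x 3 - 3 * x 3 ^ 2 = 0 := congrFun h 3
    have h4 : -(2 * x 0 * x 4) + (3 / 2) * x 4 ^ 2 = 0 := congrFun h 4
    have b1 := sq_le_of_three_sq_eq (t := x 0) (y := x 1) (by linear_combination -h1)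
    have b2 := sq_le_of_three_sq_eq (t := x 0) (y := x 2) (by linear_combination -h2)
    have b3 := sq_le_of_three_sq_eq (t := x 0) (y := x 3) (by linear_combination -h3)
    have e4 : x 4 = 0 := by
      rcases eq_zero_or_eq_of_three_sq_eq (t := x 0) (y := x 4) (by linear_combination 2 * h4)
        with e4 | e4
      · exact e4
      · have : x 0 = 0 := by nlinarith [sq_nonneg (x 0)]
        linarith
    rw [e4] at h0
    refine ⟨?_, ?_, ?_, e4⟩ <;> nlinarith [sq_nonneg (x 1), sq_nonneg (x 2), sq_nonneg (x 3)]
  · rintro ⟨h1, h2, h3, h4⟩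
    ext i
    fin_cases i <;> simp [gradFStar, h1, h2, h3, h4]

theorem exists_ne_zero_eq_smul_aPt_iff {x : Fin 5 → ℝ} (hx : x ≠ 0) :
    (∃ c : ℝ, c ≠ 0 ∧ x = c • aPt) ↔ x 1 = 0 ∧ x 2 = 0 ∧ x 3 = 0 ∧ x 4 = 0 := by
  constructor
  · rintro ⟨c, -, rfl⟩
    simp [aPt]
  · rintro ⟨h1, h2, h3, h4⟩
    have hx_eq : x = x 0 • aPt := by
      ext i
      fin_cases i <;> simp [aPt, h1, h2, h3, h4]
    refine ⟨x 0, fun h0 => hx ?_, hx_eq⟩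
    rw [hx_eq, h0, zero_smul]

/-- `f*` vanishes at `a = (1,0,0,0,0)` together with its gradient, and for nonzero
`x ∈ ℝ⁵` the gradient `∇f*(x)` vanishes iff `x` is a nonzero scalar multiple of `a`;
hence `[1:0:0:0:0]` is the unique singular point of the real projective cubic
`Z_ℝ(f*) ⊂ ℝP⁴`. -/
theorem stmt_1 :
    fStar aPt = 0 ∧ fderiv ℝ fStar aPt = 0 ∧
      ∀ x : Fin 5 → ℝ, x ≠ 0 →
        (fderiv ℝ fStar x = 0 ↔ ∃ c : ℝ, c ≠ 0 ∧ x = c • aPt) := by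
  refine ⟨by simp [fStar, aPt], ?_, fun x hx => ?_⟩
  · simp [fderiv_fStar_eq_zero_iff, gradFStar_eq_zero_iff, aPt]
  · rw [fderiv_fStar_eq_zero_iff, gradFStar_eq_zero_iff, exists_ne_zero_eq_smul_aPt_iff hx]
end
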